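/- Let (A,μ,α) be a Hom-alternative algebra. Then as(wx,α(y),α(z)) − as(xy,α(z),α(w)) + as(yz,α(w),α(x)) = α²(w)·as(x,y,z) + as(w,x,y)·α²(z) for all w,x,y,z ∈ A. -/
import Mathlib


variable {K A : Type*} [Field K] [CharZero K] [AddCommGroup A] [Module K A]

/-- Hom-associator of a multiplication μ with twisting map α. -/
def homAs (μ : A →ₗ[K] A →ₗ[K] A) (α : A →ₗ[K] A) (x y z : A) : A :=
  μ (μ x y) (α z) - μ (α x) (μ y z)

theorem stmt4 (μ : A →ₗ[K] A →ₗ[K] A) (α : A →ₗ[K] A)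
    (hmult : ∀ x y : A, α (μ x y) = μ (α x) (α y))
    (h1 : ∀ x y : A, homAs μ α x x y = 0)
    (h2 : ∀ x y : A, homAs μ α x y y = 0)
    (h3 : ∀ x y : A, homAs μ α x y x = 0) :
    ∀ w x y z : A,
      homAs μ α (μ w x) (α y) (α z) - homAs μ α (μ x y) (α z) (α w)
          + homAs μ α (μ y z) (α w) (α x)
        = μ (α (α w)) (homAs μ α x y z) + μ (homAs μ α w x y) (α (α z)) := by
  -- Linearized alternativity in the first two arguments
  have lin1 : ∀ a b c : A, homAs μ α a b c + homAs μ α b a c = 0 := by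
    intro a b c
    have hx := h1 (a + b) c
    have hexp : homAs μ α (a + b) (a + b) c
        = homAs μ α a a c + (homAs μ α a b c + homAs μ α b a c) + homAs μ α b b c := by
      simp only [homAs, map_add, LinearMap.add_apply]
      abel
    rw [hexp, h1 a c, h1 b c] at hx
    simpa using hx
  -- Linearized alternativity in the last two arguments
  have lin2 : ∀ a b c : A, homAs μ α a b c + homAs μ α a c b = 0 := by
    intro a b c
    have hx := h2 a (b + c)
    have hexp : homAs μ α a (b + c) (b + c)
        = homAs μ α a b b + (homAs μ α a b c + homAs μ α a c b) + homAs μ α a c c := by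
      simp only [homAs, map_add, LinearMap.add_apply]
      abel
    rw [hexp, h2 a b, h2 a c] at hx
    simpa using hx
  intro w x y z
  have e1 := lin1 (α w) (μ x y) (α z)
  have e2 := lin2 (α w) (α x) (μ y z)
  have e3 := lin1 (α w) (μ y z) (α x)
  have e4 := lin2 (μ x y) (α w) (α z)
  have key : homAs μ α (μ w x) (α y) (α z) - homAs μ α (μ x y) (α z) (α w)
          + homAs μ α (μ y z) (α w) (α x)
      = (μ (α (α w)) (homAs μ α x y z) + μ (homAs μ α w x y) (α (α z)))
        + ((homAs μ α (α w) (μ x y) (α z) + homAs μ α (μ x y) (α w) (α z))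
          - (homAs μ α (α w) (α x) (μ y z) + homAs μ α (α w) (μ y z) (α x))
          + (homAs μ α (α w) (μ y z) (α x) + homAs μ α (μ y z) (α w) (α x))
          - (homAs μ α (μ x y) (α w) (α z) + homAs μ α (μ x y) (α z) (α w))) := by
    simp only [homAs, hmult, map_add, map_sub, LinearMap.add_apply, LinearMap.sub_apply]
    abel
  rw [e1, e2, e3, e4] at key
  simpa using key
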